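/- arXiv:2210.00671 — 7 statements merged into one kernel-verified Lean document; each statement's English description precedes it below -/
import Mathlib

section
/- Let ν ≥ 2 and β ≥ 1 be integers, c ∈ ℝ, j, L ∈ ℕ, and let q : ℕ → ℝ satisfy q(ℓ) = 0 for ℓ > L. Let z : ℝ → ℝ and t₀ ∈ ℝ be such that z has derivative −c·z(t₀)^{ν+1}/(ν−(ν−1)z(t₀)) at t₀, with ν−(ν−1)z(t₀) ≠ 0. Define G(t) = z(t)^{jν+1} · Σ_{ℓ=0}^{L+1} q(ℓ)·(ν−(ν−1)z(t))^{−(β+ℓ+j)}, and define q'(ℓ) = ν·(β+ℓ+j−1)·q(ℓ−1) − (β+ℓ−1−(ν−1)j)·q(ℓ) for ℓ ≥ 1 and q'(0) = −(β−1−(ν−1)j)·q(0). Then G has derivative at t₀ equal to −c · z(t₀)^{(j+1)ν+1} · Σ_{ℓ=0}^{L+1} q'(ℓ)·(ν−(ν−1)z(t₀))^{−(β+ℓ+j+1)}. -/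
/-! With `w = ν - (ν - 1) z` one has `(ν - 1) z = ν - w`, so along the flow every monomial
`z^m w^k` differentiates to `-c z^(m+ν) ((m + k) w^(k-1) - ν k w^(k-2))`. The second part moves
the index `ℓ` up by one; collecting equal powers of `w` gives the recurrence, the overflowing
top term vanishing because `q (L + 1) = 0`. -/

open Finset

theorem Finset.sum_range_succ_eq_sum_add_shift {M : Type*} [AddCommMonoid M] {f g h : ℕ → M}
    {n : ℕ} (h_zero : h 0 = f 0) (h_succ : ∀ i, h (i + 1) = f (i + 1) + g i) (hg : g n = 0) :
    ∑ i ∈ range (n + 1), h i = ∑ i ∈ range (n + 1), (f i + g i) := by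
  rw [sum_range_succ', sum_add_distrib, sum_range_succ' f, sum_range_succ g, hg, add_zero,
    h_zero, add_right_comm, ← sum_add_distrib]
  simp only [h_succ]

theorem hasDerivAt_pow_mul_zpow_of_flow {z : ℝ → ℝ} {t₀ a c : ℝ} {p : ℕ} (m : ℕ) (k : ℤ)
    (hw : a - (a - 1) * z t₀ ≠ 0)
    (hz : HasDerivAt z (-c * z t₀ ^ (p + 1) / (a - (a - 1) * z t₀)) t₀) :
    HasDerivAt (fun t => z t ^ m * (a - (a - 1) * z t) ^ k)
      (-c * z t₀ ^ (m + p) * ((m + k) * (a - (a - 1) * z t₀) ^ (k - 1)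
        - a * k * (a - (a - 1) * z t₀) ^ (k - 2))) t₀ := by
  have hw' := (hz.const_mul (a - 1)).const_sub a
  refine ((hz.pow m).mul ((hasDerivAt_zpow k _ (Or.inl hw)).comp t₀ hw')).congr_deriv ?_
  simp only [Pi.pow_apply, Function.comp_apply]
  generalize hw_def : a - (a - 1) * z t₀ = w at hw ⊢
  rw [show k - 2 = k - 1 - 1 by ring, zpow_sub_one₀ hw (k - 1), zpow_sub_one₀ hw k]
  rcases m with _ | m
  · field_simp
    linear_combination (-(c * k * z t₀ ^ p)) * hw_def
  · rw [Nat.add_sub_cancel]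
    field_simp
    linear_combination (-(c * k * z t₀ ^ (m + 1 + p))) * hw_def

theorem coefficient_recurrence_general
    (ν β : ℕ)
    (c : ℝ) (j L : ℕ) (q q' : ℕ → ℝ)
    (hqL : ∀ ℓ : ℕ, L < ℓ → q ℓ = 0)
    (z : ℝ → ℝ) (t₀ : ℝ)
    (hden : (ν : ℝ) - ((ν : ℝ) - 1) * z t₀ ≠ 0)
    (hz : HasDerivAt z (-c * z t₀ ^ (ν + 1) / ((ν : ℝ) - ((ν : ℝ) - 1) * z t₀)) t₀)
    (hq'0 : q' 0 = -((β : ℝ) - 1 - ((ν : ℝ) - 1) * (j : ℝ)) * q 0)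
    (hq' : ∀ ℓ : ℕ, 1 ≤ ℓ →
      q' ℓ = (ν : ℝ) * ((β : ℝ) + (ℓ : ℝ) + (j : ℝ) - 1) * q (ℓ - 1)
        - ((β : ℝ) + (ℓ : ℝ) - 1 - ((ν : ℝ) - 1) * (j : ℝ)) * q ℓ) :
    HasDerivAt
      (fun t => z t ^ (j * ν + 1) *
        ∑ ℓ ∈ Finset.range (L + 2),
          q ℓ * ((ν : ℝ) - ((ν : ℝ) - 1) * z t) ^ (-(β + ℓ + j : ℤ)))
      (-c * z t₀ ^ ((j + 1) * ν + 1) *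
        ∑ ℓ ∈ Finset.range (L + 2),
          q' ℓ * ((ν : ℝ) - ((ν : ℝ) - 1) * z t₀) ^ (-(β + ℓ + j + 1 : ℤ)))
      t₀ := by
  have hG := HasDerivAt.fun_sum fun ℓ (_ : ℓ ∈ range (L + 2)) =>
    (hasDerivAt_pow_mul_zpow_of_flow (j * ν + 1) (-(β + ℓ + j : ℤ)) hden hz).const_mul (q ℓ)
  simp only [← mul_sum, mul_left_comm (q _)] at hG
  rw [show (j + 1) * ν + 1 = j * ν + 1 + ν by ring]
  refine hG.congr_deriv (congrArg _ (Eq.symm ?_))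
  set w := (ν : ℝ) - ((ν : ℝ) - 1) * z t₀
  simp only [show ∀ ℓ : ℕ, -(β + ℓ + j + 1 : ℤ) = -(β + ℓ + j : ℤ) - 1 from fun ℓ => by ring]
  refine (sum_range_succ_eq_sum_add_shift
    (f := fun ℓ =>
      q ℓ * ((↑(j * ν + 1) + ((-(β + ℓ + j : ℤ) : ℤ) : ℝ)) * w ^ (-(β + ℓ + j : ℤ) - 1)))
    (g := fun ℓ => -(q ℓ * (ν * ((-(β + ℓ + j : ℤ) : ℤ) : ℝ) * w ^ (-(β + ℓ + j : ℤ) - 2))))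
    ?_ ?_ ?_).trans (sum_congr rfl fun ℓ _ => by ring)
  · rw [hq'0]; push_cast; ring
  · intro i
    rw [hq' (i + 1) (by omega), Nat.add_sub_cancel,
      show -(β + (i + 1 : ℕ) + j : ℤ) - 1 = -(β + i + j : ℤ) - 2 by push_cast; ring]
    push_cast
    ring
  · simp [hqL (L + 1) (by omega)]

/-- The coefficient recurrence for derivatives of partial-fraction forms along the
string-equation flow: if `G(t) = z(t)^(jν+1) ∑_{ℓ=0}^{L+1} q(ℓ) (ν-(ν-1)z(t))^{-(β+ℓ+j)}`
and `z' (t₀) = -c z(t₀)^(ν+1)/(ν-(ν-1)z(t₀))`, then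
`G'(t₀) = -c z(t₀)^((j+1)ν+1) ∑_{ℓ=0}^{L+1} q'(ℓ) (ν-(ν-1)z(t₀))^{-(β+ℓ+j+1)}`
where `q'(ℓ) = ν(β+ℓ+j-1) q(ℓ-1) - (β+ℓ-1-(ν-1)j) q(ℓ)`. -/
theorem coefficient_recurrence
    (ν β : ℕ) (hν : 2 ≤ ν) (hβ : 1 ≤ β)
    (c : ℝ) (j L : ℕ) (q q' : ℕ → ℝ)
    (hqL : ∀ ℓ : ℕ, L < ℓ → q ℓ = 0)
    (z : ℝ → ℝ) (t₀ : ℝ)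
    (hden : (ν : ℝ) - ((ν : ℝ) - 1) * z t₀ ≠ 0)
    (hz : HasDerivAt z (-c * z t₀ ^ (ν + 1) / ((ν : ℝ) - ((ν : ℝ) - 1) * z t₀)) t₀)
    (hq'0 : q' 0 = -((β : ℝ) - 1 - ((ν : ℝ) - 1) * (j : ℝ)) * q 0)
    (hq' : ∀ ℓ : ℕ, 1 ≤ ℓ →
      q' ℓ = (ν : ℝ) * ((β : ℝ) + (ℓ : ℝ) + (j : ℝ) - 1) * q (ℓ - 1)
        - ((β : ℝ) + (ℓ : ℝ) - 1 - ((ν : ℝ) - 1) * (j : ℝ)) * q ℓ) :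
    HasDerivAt
      (fun t => z t ^ (j * ν + 1) *
        ∑ ℓ ∈ Finset.range (L + 2),
          q ℓ * ((ν : ℝ) - ((ν : ℝ) - 1) * z t) ^ (-(β + ℓ + j : ℤ)))
      (-c * z t₀ ^ ((j + 1) * ν + 1) *
        ∑ ℓ ∈ Finset.range (L + 2),
          q' ℓ * ((ν : ℝ) - ((ν : ℝ) - 1) * z t₀) ^ (-(β + ℓ + j + 1 : ℤ)))
      t₀ :=
  coefficient_recurrence_general ν β c j L q q' hqL z t₀ hden hz hq'0 hq'
end

section
/- Let β be an integer and j a natural number with j ≥ β − 1. Let q, q' : ℤ → ℝ satisfy q(ℓ) = 0 for all ℓ < 0 and, for every ℓ ∈ ℤ, q'(ℓ) = 2·(β+ℓ+j−1)·q(ℓ−1) − (β+ℓ−1−j)·q(ℓ). Suppose q(ℓ) = 0 for all ℓ ≤ j−β, and suppose there is an integer E ≥ j−β+2 with q(ℓ) = 0 for all ℓ ≥ E. Then q'(ℓ) = 0 for all ℓ ≤ j+1−β and q'(ℓ) = 0 for all ℓ ≥ E+1; in particular the length (E−1)−(j−β) of the band of possibly nonzero entries of q equals the length (E)−(j+1−β)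 of the band of possibly nonzero entries of q'. -/
/-- Band preservation for the 4-valent coefficient recurrence
`q'(ℓ) = 2(β+ℓ+j-1) q(ℓ-1) - (β+ℓ-1-j) q(ℓ)`: if `q` vanishes for `ℓ ≤ j-β` and for
`ℓ ≥ E`, then `q'` vanishes for `ℓ ≤ j+1-β` and for `ℓ ≥ E+1`; in particular the band
length of possibly nonzero entries is unchanged. -/
theorem band_preservation
    (β : ℤ) (j : ℕ) (hj : β - 1 ≤ (j : ℤ))
    (q q' : ℤ → ℝ)
    (hqneg : ∀ ℓ : ℤ, ℓ < 0 → q ℓ = 0)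
    (hrec : ∀ ℓ : ℤ, q' ℓ =
      2 * ((β : ℝ) + (ℓ : ℝ) + (j : ℝ) - 1) * q (ℓ - 1)
        - ((β : ℝ) + (ℓ : ℝ) - 1 - (j : ℝ)) * q ℓ)
    (hlow : ∀ ℓ : ℤ, ℓ ≤ (j : ℤ) - β → q ℓ = 0)
    (E : ℤ) (hE : (j : ℤ) - β + 2 ≤ E)
    (hhigh : ∀ ℓ : ℤ, E ≤ ℓ → q ℓ = 0) :
    (∀ ℓ : ℤ, ℓ ≤ (j : ℤ) + 1 - β → q' ℓ = 0) ∧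
    (∀ ℓ : ℤ, E + 1 ≤ ℓ → q' ℓ = 0) ∧
    (E - 1) - ((j : ℤ) - β) = E - ((j : ℤ) + 1 - β) := by
  refine ⟨?_, ?_, by ring⟩
  · intro ℓ hℓ
    rw [hrec ℓ, hlow (ℓ - 1) (by omega)]
    rcases lt_or_eq_of_le hℓ with h | h
    · rw [hlow ℓ (by omega)]; ring
    · have : (β : ℝ) + (ℓ : ℝ) - 1 - (j : ℝ) = 0 := by
        have : (ℓ : ℝ) = (j : ℝ) + 1 - (β : ℝ) := by exact_mod_cast congrArg (Int.cast : ℤ → ℝ) h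
        rw [this]; ring
      rw [this]; ring
  · intro ℓ hℓ
    rw [hrec ℓ, hhigh (ℓ - 1) (by omega), hhigh ℓ (by omega)]; ring
end

section
/- For a natural number s ≥ 1, let A(ℓ) be the s×s rational matrix with (0-based) entries A(ℓ)[i,i] = 2(2ℓ + i + 1), A(ℓ)[i,i+1] = −(i+1), and 0 otherwise; let S be the s×s upper-triangular rational matrix with entries S[i,k] = (−1)^{k−i}·(1/2)^{k−i}·C(k, k−i) for i ≤ k and 0 for i > k; and let D(ℓ) be the diagonal matrix with D(ℓ)[i,i] = 2(2ℓ + i + 1). Then for every ℓ ∈ ℕ, A(ℓ)·S = S·D(ℓ). -/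
/-- Simultaneous diagonalization: the unipotent matrix `S` with entries
`S[i,k] = (-1)^(k-i) (1/2)^(k-i) C(k, k-i)` for `i ≤ k` satisfies `A(ℓ) S = S D(ℓ)`,
where `A(ℓ)` has diagonal `2(2ℓ+i+1)` and superdiagonal `-(i+1)`, and `D(ℓ)` is the
diagonal matrix with entries `2(2ℓ+i+1)` (all indices 0-based). -/
theorem A_diagonalization
    (s : ℕ) (hs : 1 ≤ s)
    (A : ℕ → Matrix (Fin s) (Fin s) ℚ)
    (hA : ∀ ℓ : ℕ, ∀ i i' : Fin s,
      A ℓ i i' = if (i' : ℕ) = (i : ℕ) then 2 * (2 * (ℓ : ℚ) + (i : ℚ) + 1)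
        else if (i' : ℕ) = (i : ℕ) + 1 then -((i : ℚ) + 1) else 0)
    (S : Matrix (Fin s) (Fin s) ℚ)
    (hS : ∀ i k : Fin s,
      S i k = if (i : ℕ) ≤ (k : ℕ) then
          (-1) ^ ((k : ℕ) - (i : ℕ)) * (1 / 2 : ℚ) ^ ((k : ℕ) - (i : ℕ)) *
            (Nat.choose (k : ℕ) ((k : ℕ) - (i : ℕ)) : ℚ)
        else 0)
    (D : ℕ → Matrix (Fin s) (Fin s) ℚ)
    (hD : ∀ ℓ : ℕ, ∀ i i' : Fin s,
      D ℓ i i' = if i' = i then 2 * (2 * (ℓ : ℚ) + (i : ℚ) + 1) else 0) :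
    ∀ ℓ : ℕ, A ℓ * S = S * D ℓ := by
  intro ℓ
  ext i k
  rw [Matrix.mul_apply, Matrix.mul_apply]
  -- RHS: only j = k contributes
  have hRHS : ∑ j, S i j * D ℓ j k = S i k * (2 * (ℓ : ℚ) + (k : ℚ) + 1) * 2 := by
    rw [Fintype.sum_eq_single k (fun j hj => by
      rw [hD]
      simp [Ne.symm hj])]
    rw [hD]
    simp
    ring
  rw [hRHS]
  by_cases h1 : (i : ℕ) + 1 < s
  · -- i has a successor i₁ in Fin s
    set i₁ : Fin s := ⟨(i : ℕ) + 1, h1⟩ with hi₁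
    have hne : i ≠ i₁ := by
      intro h
      have := congrArg Fin.val h
      simp [hi₁] at this
    have hLHS : ∑ j, A ℓ i j * S j k
        = A ℓ i i * S i k + A ℓ i i₁ * S i₁ k := by
      refine Fintype.sum_eq_add i i₁ hne (fun j ⟨hj1, hj2⟩ => ?_)
      rw [hA]
      have h1' : (j : ℕ) ≠ (i : ℕ) := fun h => hj1 (Fin.ext h)
      have h2' : (j : ℕ) ≠ (i : ℕ) + 1 := fun h => hj2 (Fin.ext h)
      simp [h1', h2']
    rw [hLHS, hA, hA]
    have hii1 : ((i : ℕ) + 1 ≠ (i : ℕ)) := by omega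
    simp only [hi₁, hii1, eq_self_iff_true, ite_true, ite_false, if_true, if_false]
    rcases lt_trichotomy ((i : ℕ)) ((k : ℕ)) with hik | hik | hik
    · -- i < k : the binomial identity case
      obtain ⟨m, hm⟩ : ∃ m, (k : ℕ) = (i : ℕ) + m + 1 := ⟨(k:ℕ) - (i:ℕ) - 1, by omega⟩
      have e1 : (k : ℕ) - (i : ℕ) = m + 1 := by omega
      have e2 : (k : ℕ) - ((i : ℕ) + 1) = m := by omega
      rw [hS, hS, if_pos (le_of_lt hik), if_pos (by omega : (i:ℕ)+1 ≤ (k:ℕ)), e1, e2]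
      have hkey : ((k : ℕ).choose (m + 1) : ℚ) * (m + 1) =
          ((k : ℕ).choose m : ℚ) * ((i : ℚ) + 1) := by
        have h := Nat.choose_succ_right_eq (k : ℕ) m
        have hsub : (k : ℕ) - m = (i : ℕ) + 1 := by omega
        rw [hsub] at h
        exact_mod_cast congrArg (Nat.cast : ℕ → ℚ) h
      have hkQ : (k : ℚ) = (i : ℚ) + m + 1 := by exact_mod_cast congrArg (Nat.cast : ℕ → ℚ) hm
      rw [hkQ]
      linear_combination ((-1:ℚ)^m * (1/2:ℚ)^m) * hkey
    · -- i = k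
      have hik2 : ¬((i : ℕ) + 1 ≤ (k : ℕ)) := by omega
      rw [hS i₁ k]
      simp only [hi₁]
      rw [if_neg hik2]
      have hkQ : (k : ℚ) = (i : ℚ) := by exact_mod_cast congrArg (Nat.cast : ℕ → ℚ) hik.symm
      rw [hkQ]
      ring
    · -- i > k : everything vanishes
      rw [hS i k, hS i₁ k]
      simp only [hi₁]
      rw [if_neg (by omega), if_neg (by omega)]
      ring
  · -- i is the last index: only the diagonal term
    have hLHS : ∑ j, A ℓ i j * S j k = A ℓ i i * S i k := by
      refine Fintype.sum_eq_single i (fun j hj => ?_)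
      rw [hA]
      have h1' : (j : ℕ) ≠ (i : ℕ) := fun h => hj (Fin.ext h)
      have h2' : (j : ℕ) ≠ (i : ℕ) + 1 := by
        have := j.isLt
        omega
      simp [h1', h2']
    rw [hLHS, hA, if_pos rfl]
    have hki : (k : ℕ) ≤ (i : ℕ) := by
      have := k.isLt
      omega
    rcases eq_or_lt_of_le hki with hik | hik
    · have hkQ : (k : ℚ) = (i : ℚ) := by exact_mod_cast congrArg (Nat.cast : ℕ → ℚ) hik
      rw [hkQ]; ring
    · rw [hS i k, if_neg (by omega)]
      ring
end

section
/- Let s ≥ 1, j_G ∈ ℕ, and j ≥ j_G. For k ∈ ℕ let A(k) be the s×s rational matrix with (0-based) entries A(k)[i,i] = 2(2k + i + 1), A(k)[i,i+1] = −(i+1), and 0 otherwise, and let P = A(j−1)·A(j−2)···A(j_G) be the ordered product. Then for every 0-based column index n with 0 ≤ n ≤ s−1, the n-th column sum of P satisfies Σ_{i=0}^{s−1} P[i,n] = (1/2^n) · Σ_{k=0}^{n} C(n, k) · Π_{ℓ=j_G}^{j−1} 2(2ℓ + k + 1). -/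
/-! The rows `binomialRow s k = (C(n,k) / 2^n)_n` are common left eigenvectors of all the
matrices `A(ℓ)`, with eigenvalue `2(2ℓ+k+1)`: in the `n`-th entry of `binomialRow s k * A(ℓ)`
the superdiagonal contributes `-n C(n-1,k) = -(n-k) C(n,k)`. Since these rows sum to the all-ones
row (the sum over `k` of `C(n,k)` is `2^n`), the row of column sums of `P` is
`∑_k (∏_ℓ 2(2ℓ+k+1)) • binomialRow s k`. -/

open Finset Matrix

lemma Nat.cast_choose_mul_succ {R : Type*} [CommRing R] (n k : ℕ) :
    (n.choose k : R) * (n + 1) = (n + 1).choose k * (n + 1 - k) := by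
  rcases le_or_gt k (n + 1) with hk | hk
  · have h := congrArg (Nat.cast : ℕ → R) (Nat.choose_mul_succ_eq n k)
    push_cast [Nat.cast_sub hk] at h
    exact h
  · simp [Nat.choose_eq_zero_of_lt hk, Nat.choose_eq_zero_of_lt (Nat.lt_of_succ_lt hk)]

lemma Finset.sum_range_choose_mul_of_lt {R : Type*} [Semiring R] {n s : ℕ} (hn : n < s)
    (f : ℕ → R) : ∑ k ∈ range s, n.choose k * f k = ∑ k ∈ range (n + 1), n.choose k * f k :=
  (sum_subset (range_subset_range.2 hn) fun k _ hk => by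
    rw [Nat.choose_eq_zero_of_lt (by simpa using hk), Nat.cast_zero, zero_mul]).symm

lemma List.prod_map_range_sub_eq_prod_Ico {M : Type*} [CommMonoid M] (c : ℕ → M) {a b : ℕ}
    (hab : a ≤ b) :
    ((List.range (b - a)).map fun m => c (b - 1 - m)).prod = ∏ ℓ ∈ Finset.Ico a b, c ℓ := by
  change ∏ m ∈ Finset.range (b - a), c (b - 1 - m) = _
  rw [prod_Ico_eq_prod_range, ← prod_range_reflect]
  exact prod_congr rfl fun m hm => by rw [Finset.mem_range] at hm; congr 1; omega

lemma Matrix.vecMul_list_prod_map_of_vecMul_eq_smul {ι n R : Type*} [Fintype n] [DecidableEq n]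
    [CommSemiring R] {v : n → R} {A : ι → Matrix n n R} {c : ι → R}
    (h : ∀ i, v ᵥ* A i = c i • v) (L : List ι) : v ᵥ* (L.map A).prod = (L.map c).prod • v := by
  induction L with
  | nil => simp
  | cons i L ih => rw [List.map_cons, List.prod_cons, ← vecMul_vecMul, h, smul_vecMul, ih,
      List.map_cons, List.prod_cons, mul_smul]

def dynamicsMatrix (s k : ℕ) : Matrix (Fin s) (Fin s) ℚ :=
  Matrix.of fun i i' => if (i' : ℕ) = (i : ℕ) then 2 * (2 * (k : ℚ) + (i : ℚ) + 1)
    else if (i' : ℕ) = (i : ℕ) + 1 then -((i : ℚ) + 1) else 0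

def binomialRow (s k : ℕ) : Fin s → ℚ := fun n => (n : ℕ).choose k / 2 ^ (n : ℕ)

lemma sum_binomialRow (s : ℕ) : ∑ k ∈ range s, binomialRow s k = 1 := by
  ext n
  rw [Finset.sum_apply, Pi.one_apply]
  simp only [binomialRow, ← sum_div]
  have hrange := sum_range_choose_mul_of_lt n.isLt (fun _ => (1 : ℚ))
  simp only [mul_one] at hrange
  rw [hrange, ← Nat.cast_sum, Nat.sum_range_choose]
  push_cast
  exact div_self (by positivity)

lemma binomialRow_vecMul_dynamicsMatrix (s k ℓ : ℕ) :
    binomialRow s k ᵥ* dynamicsMatrix s ℓ = (2 * (2 * ℓ + k + 1) : ℚ) • binomialRow s k := by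
  ext ⟨n, hn⟩
  simp only [vecMul, dotProduct, Pi.smul_apply, smul_eq_mul]
  cases n with
  | zero =>
    rw [Fintype.sum_eq_single ⟨0, hn⟩ fun m hm => by
      simp [dynamicsMatrix, Ne.symm (Fin.val_ne_of_ne hm)]]
    cases k <;> simp [dynamicsMatrix, binomialRow]
  | succ n =>
    rw [Fintype.sum_eq_add ⟨n + 1, hn⟩ ⟨n, by omega⟩ (by simp [Fin.ext_iff]) fun m ⟨h₁, h₂⟩ => by
      have h₁' : (m : ℕ) ≠ n + 1 := fun h => h₁ (Fin.ext h)
      have h₂' : (m : ℕ) ≠ n := fun h => h₂ (Fin.ext h)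
      rw [dynamicsMatrix, of_apply, if_neg, if_neg, mul_zero] <;> dsimp only <;> omega]
    simp only [dynamicsMatrix, binomialRow, of_apply, if_pos, if_neg (by omega : n + 1 ≠ n)]
    push_cast
    rw [pow_succ]
    field_simp
    linear_combination -Nat.cast_choose_mul_succ (R := ℚ) n k

lemma binomialRow_vecMul_list_prod (s k : ℕ) {a b : ℕ} (hab : a ≤ b) :
    binomialRow s k ᵥ* ((List.range (b - a)).map fun m => dynamicsMatrix s (b - 1 - m)).prod =
      (∏ ℓ ∈ Ico a b, (2 * (2 * ℓ + k + 1) : ℚ)) • binomialRow s k := by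
  rw [vecMul_list_prod_map_of_vecMul_eq_smul fun m => binomialRow_vecMul_dynamicsMatrix s k _,
    List.prod_map_range_sub_eq_prod_Ico (fun ℓ => (2 * (2 * ℓ + k + 1) : ℚ)) hab]

theorem ordered_product_column_sums_general
    (s : ℕ) (jG j : ℕ) (hj : jG ≤ j)
    (A : ℕ → Matrix (Fin s) (Fin s) ℚ)
    (hA : ∀ k : ℕ, ∀ i i' : Fin s,
      A k i i' = if (i' : ℕ) = (i : ℕ) then 2 * (2 * (k : ℚ) + (i : ℚ) + 1)
        else if (i' : ℕ) = (i : ℕ) + 1 then -((i : ℚ) + 1) else 0)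
    (P : Matrix (Fin s) (Fin s) ℚ)
    (hP : P = ((List.range (j - jG)).map (fun m => A (j - 1 - m))).prod) :
    ∀ n : Fin s, ∑ i : Fin s, P i n =
      (1 / 2 ^ (n : ℕ)) * ∑ k ∈ Finset.range ((n : ℕ) + 1),
        (Nat.choose (n : ℕ) k : ℚ) *
          ∏ ℓ ∈ Finset.Ico jG j, (2 * (2 * (ℓ : ℚ) + (k : ℚ) + 1)) := by
  intro n
  have hA' : A = dynamicsMatrix s := funext fun k => Matrix.ext (hA k)
  have hcol : ∑ i, P i n = ((1 : Fin s → ℚ) ᵥ* P) n := by simp [vecMul, dotProduct]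
  rw [hcol, ← sum_binomialRow s, sum_vecMul, hP, hA']
  simp only [binomialRow_vecMul_list_prod s _ hj, Finset.sum_apply, Pi.smul_apply,
    smul_eq_mul, binomialRow]
  rw [← sum_range_choose_mul_of_lt n.isLt, mul_sum]
  exact sum_congr rfl fun k _ => by ring

/-- Column sums of the ordered product `P = A(j-1) ⋯ A(j_G)` of the 4-valent dynamics
matrices: the `n`-th column sum of `P` equals
`2^{-n} ∑_{k=0}^{n} C(n,k) ∏_{ℓ=j_G}^{j-1} 2(2ℓ+k+1)` (0-based indices). -/
theorem ordered_product_column_sums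
    (s : ℕ) (hs : 1 ≤ s) (jG j : ℕ) (hj : jG ≤ j)
    (A : ℕ → Matrix (Fin s) (Fin s) ℚ)
    (hA : ∀ k : ℕ, ∀ i i' : Fin s,
      A k i i' = if (i' : ℕ) = (i : ℕ) then 2 * (2 * (k : ℚ) + (i : ℚ) + 1)
        else if (i' : ℕ) = (i : ℕ) + 1 then -((i : ℚ) + 1) else 0)
    (P : Matrix (Fin s) (Fin s) ℚ)
    (hP : P = ((List.range (j - jG)).map (fun m => A (j - 1 - m))).prod) :
    ∀ n : Fin s, ∑ i : Fin s, P i n =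
      (1 / 2 ^ (n : ℕ)) * ∑ k ∈ Finset.range ((n : ℕ) + 1),
        (Nat.choose (n : ℕ) k : ℚ) *
          ∏ ℓ ∈ Finset.Ico jG j, (2 * (2 * (ℓ : ℚ) + (k : ℚ) + 1)) :=
  ordered_product_column_sums_general s jG j hj A hA P hP
end

section
/- Let w : ℝ → ℝ be defined by w(0) = 1 and w(t) = (√(1+48t) − 1)/(24t) for t ≠ 0, and define F(t) = w(t) · ( (2/3)·(2−w(t))^{−2} − (4/3)·(2−w(t))^{−3} + (2/3)·(2−w(t))^{−4} ). Then for every natural number j ≥ 1, (−1)^j times the j-th iterated derivative of F at 0 equals 12^j · j · ( 4^j · j!/12 − (2j)!/(6·j!) ). -/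
/-!
Rationalising the branch gives `w = 2 / (s + 1)` with `s = √(1 + 48 t)`, and then
`F(t) = 4 t ((1 + 48 t)^(-3/2) - (1 + 48 t)^(-2))`. By Leibniz' rule the `j`-th derivative of
`t ↦ t g(t)` at `0` is `j g^{(j-1)}(0)`, and the `k`-th derivative of `(1 + b t)^r` at `0` is
`b^k r (r - 1) ⋯ (r - k + 1)`; at `r = -3/2` and `r = -2` these falling factorials are
`(-1)^k (2k+1)! / (4^k k!)` and `(-1)^k (k+1)!`.
-/

open Nat Filter Topology

lemma iteratedDeriv_const_add_mul_rpow (a b r : ℝ) (n : ℕ) {x : ℝ} (hx : 0 < a + b * x) :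
    iteratedDeriv n (fun t => (a + b * t) ^ r) x =
      b ^ n * (descPochhammer ℝ n).eval r * (a + b * x) ^ (r - n) := by
  induction n generalizing x with
  | zero => simp
  | succ n ih =>
    have hopen : IsOpen {t : ℝ | 0 < a + b * t} := isOpen_lt continuous_const (by fun_prop)
    have hloc : iteratedDeriv n (fun t => (a + b * t) ^ r) =ᶠ[𝓝 x]
        fun t => b ^ n * (descPochhammer ℝ n).eval r * (a + b * t) ^ (r - n) :=
      eventually_of_mem (hopen.mem_nhds hx) fun t ht => ih ht
    have hderiv : HasDerivAt (fun t => (a + b * t) ^ (r - n))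
        (b * (r - n) * (a + b * x) ^ (r - n - 1)) x := by
      simpa using (((hasDerivAt_id x).const_mul b).const_add a).rpow_const (p := r - n)
        (Or.inl hx.ne')
    rw [iteratedDeriv_succ, hloc.deriv_eq, (hderiv.const_mul _).deriv, descPochhammer_succ_eval]
    push_cast
    ring_nf

lemma iteratedDeriv_succ_fun_id_mul_zero {f : ℝ → ℝ} {n : ℕ} (hf : ContDiffAt ℝ (n + 1) f 0) :
    iteratedDeriv (n + 1) (fun t => t * f t) 0 = (n + 1) * iteratedDeriv n f 0 := by
  rw [iteratedDeriv_fun_mul (f := fun t => t) contDiffAt_fun_id (by exact_mod_cast hf),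
    Finset.sum_eq_single 1]
  · simp [iteratedDeriv_fun_id_zero]
  · intro i _ hi
    simp [iteratedDeriv_fun_id_zero, hi]
  · simp

lemma descPochhammer_eval_neg_two {R : Type*} [CommRing R] (k : ℕ) :
    (descPochhammer R k).eval (-2) = (-1) ^ k * (k + 1)! := by
  induction k with
  | zero => simp
  | succ k ih =>
    rw [descPochhammer_succ_eval, ih, factorial_succ (k + 1)]
    push_cast
    ring

lemma descPochhammer_eval_neg_three_halves {K : Type*} [Field K] [CharZero K] (k : ℕ) :
    (descPochhammer K k).eval (-(3 / 2)) = (-1) ^ k * (2 * k + 1)! / (4 ^ k * k !) := by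
  induction k with
  | zero => simp
  | succ k ih =>
    rw [descPochhammer_succ_eval, ih, show 2 * (k + 1) + 1 = 2 * k + 1 + 1 + 1 by ring,
      factorial_succ (2 * k + 1 + 1), factorial_succ (2 * k + 1), factorial_succ k]
    push_cast
    field_simp
    ring

lemma Real.rpow_neg_natCast_div_two {u : ℝ} (hu : 0 ≤ u) (n : ℕ) :
    u ^ (-(n / 2 : ℝ)) = (√u ^ n)⁻¹ := by
  rw [Real.sqrt_eq_rpow, ← Real.rpow_natCast, ← Real.rpow_mul hu, Real.rpow_neg hu]
  ring_nf

/-- The paper's `z₁(z) = 2 z (z - 1)² / (3 (2 - z)⁴)`, in the partial-fraction form of the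
statement. -/
noncomputable def z₁ (x : ℝ) : ℝ :=
  x * ((2 / 3) * (2 - x) ^ (-2 : ℤ) - (4 / 3) * (2 - x) ^ (-3 : ℤ) + (2 / 3) * (2 - x) ^ (-4 : ℤ))

lemma z₁_two_div_add_one {s : ℝ} (hs : 0 < s) :
    z₁ (2 / (s + 1)) = (s ^ 2 - 1) / 12 * ((s ^ 3)⁻¹ - (s ^ 4)⁻¹) := by
  have h2w : 2 - 2 / (s + 1) = 2 * s / (s + 1) := by field_simp; ring
  rw [z₁, h2w]
  simp only [zpow_neg, zpow_ofNat]
  field_simp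
  ring

lemma sqrt_one_add_mul_sub_one_div {t : ℝ} (ht : 0 < 1 + 48 * t) (ht0 : t ≠ 0) :
    (√(1 + 48 * t) - 1) / (24 * t) = 2 / (√(1 + 48 * t) + 1) := by
  have hsq := Real.sq_sqrt ht.le
  rw [div_eq_div_iff (by positivity) (by positivity)]
  linear_combination hsq

lemma z₁_comp_eventuallyEq {w : ℝ → ℝ}
    (hw : ∀ t, 0 < 1 + 48 * t → w t = 2 / (√(1 + 48 * t) + 1)) :
    (fun t => z₁ (w t)) =ᶠ[𝓝 0]
      fun t => 4 * (t * ((1 + 48 * t) ^ (-(3 / 2) : ℝ) - (1 + 48 * t) ^ (-2 : ℝ))) := by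
  filter_upwards [(isOpen_lt continuous_const (by fun_prop) :
    IsOpen {t : ℝ | 0 < 1 + 48 * t}).mem_nhds (by norm_num)] with t ht
  rw [show (-2 : ℝ) = -((4 : ℕ) / 2) by norm_num, show -(3 / 2 : ℝ) = -((3 : ℕ) / 2) by norm_num,
    Real.rpow_neg_natCast_div_two ht.le, Real.rpow_neg_natCast_div_two ht.le, hw t ht,
    z₁_two_div_add_one (Real.sqrt_pos.2 ht), Real.sq_sqrt ht.le]
  ring

lemma iteratedDeriv_succ_mul_rpow_sub_rpow_zero (n : ℕ) :
    iteratedDeriv (n + 1)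
        (fun t : ℝ => 4 * (t * ((1 + 48 * t) ^ (-(3 / 2) : ℝ) - (1 + 48 * t) ^ (-2 : ℝ)))) 0 =
      (-1) ^ n * (4 * (n + 1) * 48 ^ n * ((2 * n + 1)! / (4 ^ n * n !) - (n + 1)!)) := by
  have hsmooth : ContDiffAt ℝ (n + 1)
      (fun t : ℝ => (1 + 48 * t) ^ (-(3 / 2) : ℝ) - (1 + 48 * t) ^ (-2 : ℝ)) 0 := by
    fun_prop (disch := norm_num)
  rw [iteratedDeriv_const_mul_field, iteratedDeriv_succ_fun_id_mul_zero hsmooth,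
    iteratedDeriv_fun_sub (by fun_prop (disch := norm_num)) (by fun_prop (disch := norm_num)),
    iteratedDeriv_const_add_mul_rpow 1 48 _ n (by norm_num),
    iteratedDeriv_const_add_mul_rpow 1 48 _ n (by norm_num),
    descPochhammer_eval_neg_three_halves, descPochhammer_eval_neg_two]
  simp only [mul_zero, add_zero, Real.one_rpow, mul_one]
  ring

/-- Count of 2-legged 4-valent genus-1 maps (g = 1 row of Table 1): with `w` the branch
of the 4-valent string equation `1 = w + 12 t w²` with `w(0) = 1`, and
`F(t) = z₁(w(t))`, we have
`(-1)^j F^{(j)}(0) = 12^j j (4^j j!/12 - (2j)!/(6 j!))` for `j ≥ 1`. -/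
theorem two_legged_genus_one_counts
    (w : ℝ → ℝ) (hw0 : w 0 = 1)
    (hw : ∀ t : ℝ, t ≠ 0 → w t = (Real.sqrt (1 + 48 * t) - 1) / (24 * t))
    (F : ℝ → ℝ)
    (hF : F = fun t => w t *
      ((2 / 3) * (2 - w t) ^ (-2 : ℤ) - (4 / 3) * (2 - w t) ^ (-3 : ℤ)
        + (2 / 3) * (2 - w t) ^ (-4 : ℤ))) :
    ∀ j : ℕ, 1 ≤ j → (-1) ^ j * iteratedDeriv j F 0 =
      12 ^ j * (j : ℝ) * (4 ^ j * (j ! : ℝ) / 12 - ((2 * j)! : ℝ) / (6 * (j ! : ℝ))) := by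
  intro j hj
  obtain ⟨n, rfl⟩ : ∃ n, j = n + 1 := ⟨j - 1, by omega⟩
  have hw_sqrt : ∀ t, 0 < 1 + 48 * t → w t = 2 / (√(1 + 48 * t) + 1) := by
    intro t ht
    rcases eq_or_ne t 0 with rfl | ht0
    · norm_num [hw0]
    · exact (hw t ht0).trans (sqrt_one_add_mul_sub_one_div ht ht0)
  rw [show F = fun t => z₁ (w t) from hF, (z₁_comp_eventuallyEq hw_sqrt).iteratedDeriv_eq,
    iteratedDeriv_succ_mul_rpow_sub_rpow_zero, ← mul_assoc, ← pow_add,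
    Odd.neg_one_pow ⟨n, by ring⟩, show 2 * (n + 1) = 2 * n + 1 + 1 by ring,
    factorial_succ (2 * n + 1), factorial_succ n,
    show (48 : ℝ) ^ n = 4 ^ n * 12 ^ n by rw [← mul_pow]; norm_num]
  push_cast
  field_simp
  ring
end

section
/- Let w : ℝ → ℝ be defined by w(0) = 1 and w(t) = (√(1+48t) − 1)/(24t) for t ≠ 0, and define G₂(t) = w(t)³ · ( (−13/3)·(2−w(t))^{−4} + 18·(2−w(t))^{−5} − 23·(2−w(t))^{−6} + (28/3)·(2−w(t))^{−7} ). Then for every natural number j ≥ 1, (−1)^{j−1} times the (j−1)-st iterated derivative of G₂ at 0 equals 12^{j−1} · (j−1) · ( ((2j)!/j!)·(7j/90 + 1/40) − 4^{j−1}·j!·(13/48) ). -/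
open Nat
open Finset


noncomputable def Hfun : ℝ → ℝ := fun t =>
  (1/24) * ((1+48*t) ^ (-(3:ℝ)/2) + 13*(1+48*t) ^ (-(4:ℝ)/2) - 15*(1+48*t) ^ (-(5:ℝ)/2)
    - 13*(1+48*t) ^ (-(6:ℝ)/2) + 14*(1+48*t) ^ (-(7:ℝ)/2))

noncomputable def pr (c : ℝ) (n : ℕ) : ℝ := ∏ i ∈ Finset.range n, (c - i)

noncomputable def qR (m : ℝ) (n : ℕ) : ℝ := ∏ i ∈ Finset.range n, (2*(i:ℝ) + m)

lemma hasDeriv_term (c : ℝ) {t : ℝ} (ht : 0 < 1 + 48*t) :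
    HasDerivAt (fun t : ℝ => (1+48*t) ^ c) (48 * c * (1+48*t) ^ (c-1)) t := by
  have h1 : HasDerivAt (fun t : ℝ => 1 + 48*t) 48 t := by
    simpa using ((hasDerivAt_id t).const_mul (48:ℝ)).const_add 1
  have := h1.rpow_const (p := c) (Or.inl (ne_of_gt ht))
  simpa [mul_comm, mul_assoc] using this

lemma iter_H (n : ℕ) : ∀ t : ℝ, 0 < 1 + 48*t →
    iteratedDeriv n Hfun t = (1/24) * 48^n *
      (pr (-(3:ℝ)/2) n * (1+48*t) ^ (-(3:ℝ)/2 - n)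
       + 13 * pr (-(4:ℝ)/2) n * (1+48*t) ^ (-(4:ℝ)/2 - n)
       - 15 * pr (-(5:ℝ)/2) n * (1+48*t) ^ (-(5:ℝ)/2 - n)
       - 13 * pr (-(6:ℝ)/2) n * (1+48*t) ^ (-(6:ℝ)/2 - n)
       + 14 * pr (-(7:ℝ)/2) n * (1+48*t) ^ (-(7:ℝ)/2 - n)) := by
  induction n with
  | zero =>
    intro t ht
    simp [pr, Hfun]
  | succ n ih =>
    intro t ht
    rw [iteratedDeriv_succ]
    have hopen : IsOpen {x : ℝ | 0 < 1 + 48*x} :=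
      isOpen_lt continuous_const (by continuity)
    have hev : iteratedDeriv n Hfun =ᶠ[nhds t] (fun t => (1/24) * 48^n *
      (pr (-(3:ℝ)/2) n * (1+48*t) ^ (-(3:ℝ)/2 - n)
       + 13 * pr (-(4:ℝ)/2) n * (1+48*t) ^ (-(4:ℝ)/2 - n)
       - 15 * pr (-(5:ℝ)/2) n * (1+48*t) ^ (-(5:ℝ)/2 - n)
       - 13 * pr (-(6:ℝ)/2) n * (1+48*t) ^ (-(6:ℝ)/2 - n)
       + 14 * pr (-(7:ℝ)/2) n * (1+48*t) ^ (-(7:ℝ)/2 - n))) := by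
      filter_upwards [hopen.mem_nhds ht] with x hx using ih x hx
    rw [hev.deriv_eq]
    have hd : HasDerivAt (fun t : ℝ => (1/24) * 48^n *
      (pr (-(3:ℝ)/2) n * (1+48*t) ^ (-(3:ℝ)/2 - n)
       + 13 * pr (-(4:ℝ)/2) n * (1+48*t) ^ (-(4:ℝ)/2 - n)
       - 15 * pr (-(5:ℝ)/2) n * (1+48*t) ^ (-(5:ℝ)/2 - n)
       - 13 * pr (-(6:ℝ)/2) n * (1+48*t) ^ (-(6:ℝ)/2 - n)
       + 14 * pr (-(7:ℝ)/2) n * (1+48*t) ^ (-(7:ℝ)/2 - n)))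
      ((1/24) * 48^n *
      (pr (-(3:ℝ)/2) n * (48 * (-(3:ℝ)/2 - n) * (1+48*t) ^ (-(3:ℝ)/2 - n - 1))
       + 13 * pr (-(4:ℝ)/2) n * (48 * (-(4:ℝ)/2 - n) * (1+48*t) ^ (-(4:ℝ)/2 - n - 1))
       - 15 * pr (-(5:ℝ)/2) n * (48 * (-(5:ℝ)/2 - n) * (1+48*t) ^ (-(5:ℝ)/2 - n - 1))
       - 13 * pr (-(6:ℝ)/2) n * (48 * (-(6:ℝ)/2 - n) * (1+48*t) ^ (-(6:ℝ)/2 - n - 1))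
       + 14 * pr (-(7:ℝ)/2) n * (48 * (-(7:ℝ)/2 - n) * (1+48*t) ^ (-(7:ℝ)/2 - n - 1)))) t := by
      exact ((((((hasDeriv_term _ ht).const_mul _).add
        ((hasDeriv_term _ ht).const_mul _)).sub
        ((hasDeriv_term _ ht).const_mul _)).sub
        ((hasDeriv_term _ ht).const_mul _)).add
        ((hasDeriv_term _ ht).const_mul _)).const_mul _
    rw [hd.deriv]
    simp only [pr, Finset.prod_range_succ, pow_succ, Nat.cast_add, Nat.cast_one]
    simp only [show ∀ c : ℝ, c - ((n:ℝ)+1) = c - (n:ℝ) - 1 from fun c => by ring]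
    ring

lemma keyE (m : ℕ) (n : ℕ) :
    (-1:ℝ)^n * 48^n * pr (-(m:ℝ)/2) n = 24^n * qR (m:ℝ) n := by
  induction n with
  | zero => simp [pr, qR]
  | succ n ih =>
    simp only [pr, qR, Finset.prod_range_succ, pow_succ] at *
    linear_combination (24*(2*(n:ℝ)+m)) * ih

lemma r3 (n : ℕ) : 2^n * (n ! : ℝ) * qR 3 n = ((2*n+1)! : ℝ) := by
  induction n with
  | zero => simp [qR]
  | succ n ih =>
    have h : (2*(n+1)+1)! = (2*n+3) * ((2*n+2) * (2*n+1)!) := by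
      rw [show 2*(n+1)+1 = (2*n+1)+1+1 from by ring, factorial_succ, factorial_succ]
    rw [qR, Finset.prod_range_succ, ← qR, h, factorial_succ]
    push_cast
    linear_combination ((2*(n:ℝ)+3)*(2*(n:ℝ)+2)) * ih

lemma r4 (n : ℕ) : qR 4 n = 2^n * ((n:ℝ)+1) * (n ! : ℝ) := by
  induction n with
  | zero => simp [qR]
  | succ n ih =>
    rw [qR, Finset.prod_range_succ, ← qR, factorial_succ]
    push_cast
    linear_combination (2*(n:ℝ)+4) * ih

lemma r5 (n : ℕ) : 6 * 2^n * ((n:ℝ)+1) * (n ! : ℝ) * qR 5 n = ((2*n+3)! : ℝ) := by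
  induction n with
  | zero => simp [qR]; norm_num [factorial]
  | succ n ih =>
    have h : (2*(n+1)+3)! = (2*n+5) * ((2*n+4) * (2*n+3)!) := by
      rw [show 2*(n+1)+3 = (2*n+3)+1+1 from by ring, factorial_succ, factorial_succ]
    rw [qR, Finset.prod_range_succ, ← qR, h, factorial_succ]
    push_cast
    linear_combination ((2*(n:ℝ)+5)*(2*(n:ℝ)+4)) * ih

lemma r6 (n : ℕ) : 2 * qR 6 n = 2^n * ((n:ℝ)+2) * ((n:ℝ)+1) * (n ! : ℝ) := by
  induction n with
  | zero => simp [qR]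
  | succ n ih =>
    rw [qR, Finset.prod_range_succ, ← qR, factorial_succ]
    push_cast
    linear_combination (2*(n:ℝ)+6) * ih

lemma r7 (n : ℕ) : 60 * 2^n * ((n:ℝ)+2) * ((n:ℝ)+1) * (n ! : ℝ) * qR 7 n = ((2*n+5)! : ℝ) := by
  induction n with
  | zero => simp [qR]; norm_num [factorial]
  | succ n ih =>
    have h : (2*(n+1)+5)! = (2*n+7) * ((2*n+6) * (2*n+5)!) := by
      rw [show 2*(n+1)+5 = (2*n+5)+1+1 from by ring, factorial_succ, factorial_succ]
    rw [qR, Finset.prod_range_succ, ← qR, h, factorial_succ]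
    push_cast
    linear_combination ((2*(n:ℝ)+7)*(2*(n:ℝ)+6)) * ih

/-- Count of regular 4-valent genus-2 maps (g = 2 row of Table 2): with `w` the branch
of the string equation `1 = w + 12 t w²` with `w(0) = 1`, and `G₂` as below,
`(-1)^(j-1) G₂^{(j-1)}(0) = 12^(j-1) (j-1) ((2j)!/j! (7j/90 + 1/40) - 4^(j-1) j! (13/48))`
for `j ≥ 1`. -/
theorem regular_genus_two_counts
    (w : ℝ → ℝ) (hw0 : w 0 = 1)
    (hw : ∀ t : ℝ, t ≠ 0 → w t = (Real.sqrt (1 + 48 * t) - 1) / (24 * t))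
    (G₂ : ℝ → ℝ)
    (hG₂ : G₂ = fun t => w t ^ 3 *
      ((-13 / 3) * (2 - w t) ^ (-4 : ℤ) + 18 * (2 - w t) ^ (-5 : ℤ)
        - 23 * (2 - w t) ^ (-6 : ℤ) + (28 / 3) * (2 - w t) ^ (-7 : ℤ))) :
    ∀ j : ℕ, 1 ≤ j → (-1) ^ (j - 1) * iteratedDeriv (j - 1) G₂ 0 =
      12 ^ (j - 1) * ((j : ℝ) - 1) *
        (((2 * j)! : ℝ) / (j ! : ℝ) * (7 * (j : ℝ) / 90 + 1 / 40)
          - 4 ^ (j - 1) * (j ! : ℝ) * (13 / 48)) := by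
  intro j hj
  obtain ⟨n, rfl⟩ : ∃ n, j = n + 1 := ⟨j - 1, (Nat.succ_pred_eq_of_pos hj).symm⟩
  simp only [Nat.add_sub_cancel]
  -- Step A : G₂ agrees with Hfun near 0
  have hEq : G₂ =ᶠ[nhds (0:ℝ)] Hfun := by
    have hmem : Metric.ball (0:ℝ) (1/48) ∈ nhds (0:ℝ) := Metric.ball_mem_nhds _ (by norm_num)
    filter_upwards [hmem] with x hx
    have hx' : 0 < 1 + 48*x := by
      rw [Metric.mem_ball, Real.dist_eq, sub_zero, abs_lt] at hx
      linarith [hx.1]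
    rcases eq_or_ne x 0 with rfl | hx0
    · simp only [hG₂, hw0]
      norm_num [Hfun, Real.one_rpow]
    · set s := Real.sqrt (1 + 48 * x) with hs
      have hs2 : s^2 = 1 + 48*x := Real.sq_sqrt (by linarith)
      have hspos : 0 < s := Real.sqrt_pos.mpr (by linarith)
      have hs1 : s + 1 ≠ 0 := by positivity
      have h24 : (24:ℝ)*x ≠ 0 := by
        simp [hx0]
      have hwx : w x = (s - 1)/(24*x) := hw x hx0
      have hw2 : w x = 2/(s+1) := by
        rw [hwx, div_eq_div_iff h24 hs1]
        linear_combination hs2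
      have h2w : (2:ℝ) - w x = 2*s/(s+1) := by
        rw [hw2]
        field_simp
        ring
      have key : ∀ (mr : ℝ) (m : ℕ), mr = (m:ℝ) → (s^2 : ℝ) ^ (-mr/2) = (s^m)⁻¹ := by
        rintro mr m rfl
        rw [← Real.rpow_natCast s 2, ← Real.rpow_mul hspos.le,
          show ((2:ℕ):ℝ)*(-(m:ℝ)/2) = -(m:ℝ) from by push_cast; ring,
          Real.rpow_neg hspos.le, Real.rpow_natCast]
      simp only [hG₂]
      rw [h2w, hw2]
      simp only [Hfun]
      rw [← hs2]
      rw [key (3:ℝ) 3 (by norm_num), key (4:ℝ) 4 (by norm_num), key (5:ℝ) 5 (by norm_num),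
        key (6:ℝ) 6 (by norm_num), key (7:ℝ) 7 (by norm_num)]
      simp only [zpow_neg, zpow_ofNat]
      have hsne : s ≠ 0 := hspos.ne'
      field_simp
      ring
  -- Step B+C : compute the iterated derivative at 0
  have h0 : iteratedDeriv n G₂ 0 = iteratedDeriv n Hfun 0 := hEq.iteratedDeriv_eq n
  rw [h0, iter_H n 0 (by norm_num)]
  simp only [show (1:ℝ) + 48*0 = 1 from by norm_num, Real.one_rpow, mul_one]
  have k3 := keyE 3 n; have k4 := keyE 4 n; have k5 := keyE 5 n
  have k6 := keyE 6 n; have k7 := keyE 7 n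
  push_cast at k3 k4 k5 k6 k7
  have expand : (-1:ℝ)^n * ((1/24) * 48^n *
      (pr (-(3:ℝ)/2) n + 13 * pr (-(4:ℝ)/2) n - 15 * pr (-(5:ℝ)/2) n
        - 13 * pr (-(6:ℝ)/2) n + 14 * pr (-(7:ℝ)/2) n))
      = (1/24) * (((-1:ℝ)^n * 48^n * pr (-(3:ℝ)/2) n)
        + 13 * ((-1:ℝ)^n * 48^n * pr (-(4:ℝ)/2) n)
        - 15 * ((-1:ℝ)^n * 48^n * pr (-(5:ℝ)/2) n)
        - 13 * ((-1:ℝ)^n * 48^n * pr (-(6:ℝ)/2) n)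
        + 14 * ((-1:ℝ)^n * 48^n * pr (-(7:ℝ)/2) n)) := by ring
  rw [expand, k3, k4, k5, k6, k7]
  -- arithmetic endgame
  have hb : (n ! : ℝ) ≠ 0 := Nat.cast_ne_zero.mpr n.factorial_ne_zero
  have hbpos : (0:ℝ) < (n ! : ℝ) := by exact_mod_cast n.factorial_pos
  have hn1 : ((n:ℝ)+1) ≠ 0 := by positivity
  have hn2 : ((n:ℝ)+2) ≠ 0 := by positivity
  have h2n : ((2:ℝ)^n) ≠ 0 := by positivity
  have v3 : qR 3 n = ((2*n+1)! : ℝ) / (2^n * (n ! : ℝ)) := by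
    rw [eq_div_iff (mul_ne_zero h2n hb)]
    linear_combination r3 n
  have v4 := r4 n
  have v5 : qR 5 n = ((2*n+3)! : ℝ) / (6 * 2^n * ((n:ℝ)+1) * (n ! : ℝ)) := by
    rw [eq_div_iff (by exact mul_ne_zero (mul_ne_zero (mul_ne_zero (by norm_num) h2n) hn1) hb)]
    linear_combination r5 n
  have v6 : qR 6 n = 2^n * ((n:ℝ)+2) * ((n:ℝ)+1) * (n ! : ℝ) / 2 := by
    rw [eq_div_iff (by norm_num)]
    linear_combination r6 n
  have v7 : qR 7 n = ((2*n+5)! : ℝ) / (60 * 2^n * ((n:ℝ)+2) * ((n:ℝ)+1) * (n ! : ℝ)) := by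
    rw [eq_div_iff (by exact mul_ne_zero (mul_ne_zero (mul_ne_zero (mul_ne_zero (by norm_num) h2n) hn2) hn1) hb)]
    linear_combination r7 n
  have hf1 : ((2*(n+1))! : ℝ) = (2*(n:ℝ)+2) * ((2*n+1)! : ℝ) := by
    rw [show 2*(n+1) = (2*n+1)+1 from by ring, factorial_succ]
    push_cast; ring
  have hf2 : (((n+1))! : ℝ) = ((n:ℝ)+1) * (n ! : ℝ) := by
    rw [factorial_succ]; push_cast; ring
  have hf3 : ((2*n+3)! : ℝ) = (2*(n:ℝ)+3)*((2*(n:ℝ)+2)*((2*n+1)! : ℝ)) := by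
    rw [show 2*n+3 = (2*n+1)+1+1 from by ring, factorial_succ, factorial_succ]
    push_cast; ring
  have hf5 : ((2*n+5)! : ℝ) =
      (2*(n:ℝ)+5)*((2*(n:ℝ)+4)*((2*(n:ℝ)+3)*((2*(n:ℝ)+2)*((2*n+1)! : ℝ)))) := by
    rw [show 2*n+5 = (2*n+1)+1+1+1+1 from by ring, factorial_succ, factorial_succ,
      factorial_succ, factorial_succ]
    push_cast; ring
  rw [v3, v4, v5, v6, v7, hf3, hf5, hf1, hf2]
  have p24 : (24:ℝ)^n = 2^n * 12^n := by rw [← mul_pow]; norm_num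
  have p4 : (4:ℝ)^n = 2^n * 2^n := by rw [← mul_pow]; norm_num
  rw [p24, p4]
  push_cast
  field_simp
  ring
end

section
/- Let w : ℝ → ℝ be defined by w(0) = 1 and w(t) = (√(1+48t) − 1)/(24t) for t ≠ 0, and define G₃(t) = w(t)³ · ( (5482/27)·(2−w(t))^{−6} − (14620/9)·(2−w(t))^{−7} + (15580/3)·(2−w(t))^{−8} − (231920/27)·(2−w(t))^{−9} + (70270/9)·(2−w(t))^{−10} − 3716·(2−w(t))^{−11} + (19600/27)·(2−w(t))^{−12} ). Then for every natural number j ≥ 1, (−1)^{j−1} times the (j−1)-st iterated derivative of G₃ at 0 equals 12^{j−1} · (j−1)(j−2)(j−3) · ( 4^{j−1}·j!·(245j/20736 + 781/41472) − ((2j)!/j!)·(337j/22680 + 1/1008) ). -/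
/-!
With `s = √(1 + 48t)` the branch is `w = 2 / (s + 1)` and `2 - w = 2s / (s + 1)`, so `G₃` is a
polynomial in `s⁻¹ = (1 + 48t)^(-1/2)` with monomials of degrees `3, …, 12`. The `n`-th derivative
of `(1 + 48t)^(-i/2)` at `0` is `(-24)ⁿ i (i + 2) ⋯ (i + 2n - 2)`; these products reduce to
`2ⁿ n!` for even `i` and to `(2n)! / (2ⁿ n!)` for odd `i`, up to polynomial factors in `n`,
which yields the closed form.
-/

open Nat Finset Filter Topology

lemma iteratedDeriv_one_add_mul_rpow (c r : ℝ) (n : ℕ) {t : ℝ} (ht : 0 < 1 + c * t) :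
    iteratedDeriv n (fun t => (1 + c * t) ^ r) t =
      c ^ n * (∏ k ∈ range n, (r - k)) * (1 + c * t) ^ (r - n) := by
  induction n generalizing t with
  | zero => simp
  | succ n ih =>
    have hU : IsOpen {t : ℝ | 0 < 1 + c * t} := isOpen_lt continuous_const (by fun_prop)
    have hloc : iteratedDeriv n (fun t => (1 + c * t) ^ r) =ᶠ[𝓝 t]
        fun t => c ^ n * (∏ k ∈ range n, (r - k)) * (1 + c * t) ^ (r - n) :=
      eventually_of_mem (hU.mem_nhds ht) fun s hs => ih hs
    have hlin : HasDerivAt (fun t => 1 + c * t) c t := by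
      simpa using ((hasDerivAt_id t).const_mul c).const_add 1
    rw [iteratedDeriv_succ, hloc.deriv_eq, ((hlin.rpow_const (Or.inl ht.ne')).const_mul _).deriv,
      prod_range_succ, sub_sub]
    push_cast
    ring

lemma inv_sqrt_pow_eq_rpow {x : ℝ} (hx : 0 ≤ x) (i : ℕ) : (√x)⁻¹ ^ i = x ^ (-(i : ℝ) / 2) := by
  rw [Real.sqrt_eq_rpow, ← Real.rpow_neg hx, ← Real.rpow_natCast, ← Real.rpow_mul hx]
  ring_nf

noncomputable def prodStepTwo (i n : ℕ) : ℝ := ∏ k ∈ range n, ((i : ℝ) + 2 * k)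

lemma prodStepTwo_add_two_mul (i n : ℕ) :
    prodStepTwo (i + 2) n * i = prodStepTwo i n * (i + 2 * n) := by
  induction n with
  | zero => simp [prodStepTwo]
  | succ n ih =>
    simp only [prodStepTwo, prod_range_succ] at *
    push_cast at *
    linear_combination (↑i + 2 + 2 * ↑n) * ih

lemma prodStepTwo_add_two {i : ℕ} (hi : 0 < i) (n : ℕ) :
    prodStepTwo (i + 2) n = prodStepTwo i n * (i + 2 * n) / i := by
  rw [← prodStepTwo_add_two_mul, mul_div_cancel_right₀ _ (by positivity)]

lemma prodStepTwo_two (n : ℕ) : prodStepTwo 2 n = 2 ^ n * n ! := by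
  induction n with
  | zero => simp [prodStepTwo]
  | succ n ih =>
    rw [prodStepTwo, prod_range_succ, ← prodStepTwo, ih, factorial_succ]
    push_cast
    ring

lemma two_pow_mul_factorial_mul_prodStepTwo_one (n : ℕ) :
    2 ^ n * n ! * prodStepTwo 1 n = (2 * n)! := by
  induction n with
  | zero => simp [prodStepTwo]
  | succ n ih =>
    rw [prodStepTwo, prod_range_succ, ← prodStepTwo, show 2 * (n + 1) = 2 * n + 1 + 1 by ring,
      factorial_succ, factorial_succ, factorial_succ]
    push_cast [← ih]
    ring

/-- Coefficients of `G₃` as a polynomial in `s⁻¹`, where `s = √(1 + 48t)`. -/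
noncomputable def genusThreeCoeff : ℕ → ℝ
  | 3 => -73/432 | 4 => -97/576 | 5 => 1303/576 | 6 => -1577/1728 | 7 => -3325/576
  | 8 => 2159/576 | 9 => 9391/1728 | 10 => -2353/576 | 11 => -337/192 | 12 => 1225/864
  | _ => 0

noncomputable def genusThreeExpansion (t : ℝ) : ℝ :=
  ∑ i ∈ Icc 3 12, genusThreeCoeff i * (1 + 48 * t) ^ (-(i : ℝ) / 2)

lemma genusThree_eq_sum_coeff_mul_inv_pow {s : ℝ} (hs : 0 < s) :
    (2 / (s + 1)) ^ 3 *
      ((5482 / 27) * (2 - 2 / (s + 1)) ^ (-6 : ℤ) - (14620 / 9) * (2 - 2 / (s + 1)) ^ (-7 : ℤ)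
        + (15580 / 3) * (2 - 2 / (s + 1)) ^ (-8 : ℤ) - (231920 / 27) * (2 - 2 / (s + 1)) ^ (-9 : ℤ)
        + (70270 / 9) * (2 - 2 / (s + 1)) ^ (-10 : ℤ) - 3716 * (2 - 2 / (s + 1)) ^ (-11 : ℤ)
        + (19600 / 27) * (2 - 2 / (s + 1)) ^ (-12 : ℤ)) =
      ∑ i ∈ Icc 3 12, genusThreeCoeff i * s⁻¹ ^ i := by
  have h2 : 2 - 2 / (s + 1) = 2 * s / (s + 1) := by field_simp; ring
  rw [h2]
  simp (disch := norm_num) only [sum_Icc_succ_top, Icc_self, sum_singleton, genusThreeCoeff,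
    zpow_neg, zpow_ofNat, div_pow, inv_pow]
  field_simp
  ring

lemma neg_one_pow_mul_iteratedDeriv_genusThreeExpansion (n : ℕ) :
    (-1) ^ n * iteratedDeriv n genusThreeExpansion 0 =
      ∑ i ∈ Icc 3 12, genusThreeCoeff i * 24 ^ n * prodStepTwo i n := by
  have hsmooth : ∀ i ∈ Icc 3 12,
      ContDiffAt ℝ n (fun t : ℝ => genusThreeCoeff i * (1 + 48 * t) ^ (-(i : ℝ) / 2)) 0 :=
    fun i _ => contDiffAt_const.mul
      ((by fun_prop : ContDiffAt ℝ n (fun t : ℝ => 1 + 48 * t) 0).rpow_const_of_ne (by norm_num))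
  unfold genusThreeExpansion
  rw [iteratedDeriv_fun_sum hsmooth, mul_sum]
  refine sum_congr rfl fun i _ => ?_
  rw [iteratedDeriv_const_mul_field, iteratedDeriv_one_add_mul_rpow _ _ _ (by norm_num),
    prodStepTwo]
  have hsign : ((-1) ^ n * 48 ^ n : ℝ) = 24 ^ n * (-2) ^ #(range n) := by
    rw [card_range, ← mul_pow, ← mul_pow]
    norm_num
  have hprod : (∏ k ∈ range n, (-(i : ℝ) / 2 - k)) * (-2) ^ #(range n) =
      ∏ k ∈ range n, ((i : ℝ) + 2 * k) := by
    rw [prod_mul_pow_card]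
    exact prod_congr rfl fun k _ => by ring
  rw [mul_zero, add_zero, Real.one_rpow, mul_one, ← hprod]
  linear_combination genusThreeCoeff i * (∏ k ∈ range n, (-(i : ℝ) / 2 - k)) * hsign

lemma sum_genusThreeCoeff_mul_prodStepTwo (n : ℕ) :
    ∑ i ∈ Icc 3 12, genusThreeCoeff i * 24 ^ n * prodStepTwo i n =
      12 ^ n * ((((n + 1 : ℕ) : ℝ) - 1) * (((n + 1 : ℕ) : ℝ) - 2) * (((n + 1 : ℕ) : ℝ) - 3)) *
        (4 ^ n * ((n + 1)! : ℝ) * (245 * ((n + 1 : ℕ) : ℝ) / 20736 + 781 / 41472)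
          - ((2 * (n + 1))! : ℝ) / ((n + 1)! : ℝ) *
            (337 * ((n + 1 : ℕ) : ℝ) / 22680 + 1 / 1008)) := by
  have hfactorial :
      ((2 * (n + 1))! : ℝ) = 2 ^ (n + 1) * (n + 1)! * (prodStepTwo 1 n * (2 * n + 1)) := by
    rw [← two_pow_mul_factorial_mul_prodStepTwo_one, prodStepTwo, prod_range_succ, ← prodStepTwo]
    push_cast
    ring
  have h24 : (24 : ℝ) ^ n = 12 ^ n * 2 ^ n := by rw [← mul_pow]; norm_num
  have h4 : (4 : ℝ) ^ n = 2 ^ n * 2 ^ n := by rw [← mul_pow]; norm_num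
  have hfact : (n ! : ℝ) ≠ 0 := by positivity
  -- each `prodStepTwo i n` unfolds down to `prodStepTwo 1 n` or `prodStepTwo 2 n`
  simp (disch := norm_num) only [sum_Icc_succ_top, Icc_self, sum_singleton, genusThreeCoeff,
    prodStepTwo_add_two, prodStepTwo_two]
  rw [hfactorial, factorial_succ, h24, h4]
  push_cast
  field_simp
  ring

lemma eq_two_div_sqrt_add_one (w : ℝ → ℝ) (hw0 : w 0 = 1)
    (hw : ∀ t : ℝ, t ≠ 0 → w t = (√(1 + 48 * t) - 1) / (24 * t)) {t : ℝ}
    (ht : 0 < 1 + 48 * t) : w t = 2 / (√(1 + 48 * t) + 1) := by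
  rcases eq_or_ne t 0 with rfl | ht0
  · norm_num [hw0]
  · have hs : 0 ≤ √(1 + 48 * t) := Real.sqrt_nonneg _
    rw [hw t ht0, div_eq_div_iff (by positivity) (by positivity)]
    linear_combination Real.sq_sqrt ht.le

/-- Count of regular 4-valent genus-3 maps (g = 3 row of Table 2): with `w` the branch
of the string equation `1 = w + 12 t w²` with `w(0) = 1`, and `G₃` as below,
`(-1)^(j-1) G₃^{(j-1)}(0) = 12^(j-1) (j-1)(j-2)(j-3)
  (4^(j-1) j! (245j/20736 + 781/41472) - (2j)!/j! (337j/22680 + 1/1008))` for `j ≥ 1`. -/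
theorem regular_genus_three_counts
    (w : ℝ → ℝ) (hw0 : w 0 = 1)
    (hw : ∀ t : ℝ, t ≠ 0 → w t = (Real.sqrt (1 + 48 * t) - 1) / (24 * t))
    (G₃ : ℝ → ℝ)
    (hG₃ : G₃ = fun t => w t ^ 3 *
      ((5482 / 27) * (2 - w t) ^ (-6 : ℤ) - (14620 / 9) * (2 - w t) ^ (-7 : ℤ)
        + (15580 / 3) * (2 - w t) ^ (-8 : ℤ) - (231920 / 27) * (2 - w t) ^ (-9 : ℤ)
        + (70270 / 9) * (2 - w t) ^ (-10 : ℤ) - 3716 * (2 - w t) ^ (-11 : ℤ)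
        + (19600 / 27) * (2 - w t) ^ (-12 : ℤ))) :
    ∀ j : ℕ, 1 ≤ j → (-1) ^ (j - 1) * iteratedDeriv (j - 1) G₃ 0 =
      12 ^ (j - 1) * (((j : ℝ) - 1) * ((j : ℝ) - 2) * ((j : ℝ) - 3)) *
        (4 ^ (j - 1) * (j ! : ℝ) * (245 * (j : ℝ) / 20736 + 781 / 41472)
          - ((2 * j)! : ℝ) / (j ! : ℝ) * (337 * (j : ℝ) / 22680 + 1 / 1008)) := by
  intro j hj
  obtain ⟨n, rfl⟩ : ∃ n, j = n + 1 := ⟨j - 1, by omega⟩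
  have hloc : G₃ =ᶠ[𝓝 0] genusThreeExpansion := by
    filter_upwards [Ioi_mem_nhds (by norm_num : (-1 / 48 : ℝ) < 0)] with t ht
    have hpos : 0 < 1 + 48 * t := by linarith [Set.mem_Ioi.1 ht]
    simp only [hG₃, genusThreeExpansion]
    rw [eq_two_div_sqrt_add_one w hw0 hw hpos,
      genusThree_eq_sum_coeff_mul_inv_pow (Real.sqrt_pos.2 hpos)]
    simp only [inv_sqrt_pow_eq_rpow hpos.le]
  rw [Nat.add_sub_cancel, hloc.iteratedDeriv_eq, neg_one_pow_mul_iteratedDeriv_genusThreeExpansion,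
    sum_genusThreeCoeff_mul_prodStepTwo]
end
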